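/- Let A ∈ ℝ^{n×d} have rank r and thin SVD A = UΣVᵀ with singular values σ₁ ≥ … ≥ σ_r > 0, let 1 ≤ k < r, set λ = ‖A_{k,⊥}‖_F²/k, let 1 ≤ m ≤ r satisfy σ_m² ≥ λ ≥ σ_{m+1}², and define Σ_λ = diag(σ_i/√(σ_i²+λ)), ridge leverage scores τ_i^λ = ‖(UΣ_λ)_{i*}‖₂², d_λ = Σ_i τ_i^λ, and sampling probabilities p_i = τ_i^λ/d_λ. Let W ∈ ℝ^{s×n} be the random sampling-and-rescaling matrix of Algorithm 1 built from these probabilities. Then E[(‖W A_{m,⊥}‖_F² − ‖A_{m,⊥}‖_F²)²] ≤ (8/s) ‖A_{k,⊥}‖_F⁴ and E[‖A_{m,⊥}ᵀ Wᵀ W A_{m,⊥} − A_{m,⊥}ᵀ A_{m,⊥}‖_F²] ≤ (8/s) ‖A_{k,⊥}‖_F⁴. -/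

import Mathlib

open Matrix BigOperators

noncomputable def frobNorm {m n : Type*} [Fintype m] [Fintype n]
    (A : Matrix m n ℝ) : ℝ := Real.sqrt (∑ i, ∑ j, (A i j) ^ 2)

noncomputable def specNorm {m n : ℕ} (A : Matrix (Fin m) (Fin n) ℝ) : ℝ :=
  ‖LinearMap.toContinuousLinearMap (Matrix.toEuclideanLin A)‖

noncomputable def truncDiag {r : ℕ} (σ : Fin r → ℝ) (m : ℕ) :
    Matrix (Fin r) (Fin r) ℝ :=
  Matrix.diagonal fun i => if (i : ℕ) < m then σ i else 0

noncomputable def samplingMatrix {n : ℕ} (p : Fin n → ℝ) (s : ℕ) (ω : Fin s → Fin n) :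
    Matrix (Fin s) (Fin n) ℝ :=
  fun i j => if j = ω i then 1 / Real.sqrt (s * p j) else 0

noncomputable def expec {n s : ℕ} (p : Fin n → ℝ) (f : (Fin s → Fin n) → ℝ) : ℝ :=
  ∑ ω : Fin s → Fin n, (∏ i, p (ω i)) * f ω

open Classical in
noncomputable def probOf {n s : ℕ} (p : Fin n → ℝ) (E : (Fin s → Fin n) → Prop) : ℝ :=
  ∑ ω : Fin s → Fin n, if E ω then (∏ i, p (ω i)) else 0

def firstCols {n r : ℕ} (U : Matrix (Fin n) (Fin r) ℝ) (k : ℕ) (h : k ≤ r) :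
    Matrix (Fin n) (Fin k) ℝ :=
  fun i j => U i (Fin.castLE h j)

noncomputable def ridgeDiag {r : ℕ} (σ : Fin r → ℝ) (lam : ℝ) :
    Matrix (Fin r) (Fin r) ℝ :=
  Matrix.diagonal fun i => σ i / Real.sqrt (σ i ^ 2 + lam)

/-!
Write `b_j` for the rows of `B = A_{m,⊥}`. Both `‖WB‖_F² − ‖B‖_F²` and `BᵀWᵀWB − BᵀB` are the
deviation of an average of `s` i.i.d. unbiased importance-sampling estimates of `∑_j v_j`, with
`v_j = ‖b_j‖²` resp. `v_j = b_j b_jᵀ`; in both cases `‖v_j‖ = ‖b_j‖²`, and the second moment of such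
a deviation is at most `(1/s) ∑_j ‖v_j‖² / p_j`. This is `≤ β ‖B‖_F² / s` as soon as
`‖b_j‖² ≤ β p_j`. Since `σ_i² ≤ λ` for `i > m`, `‖b_j‖² ≤ 2λ τ_j^λ = 2λ d_λ p_j`, and
`d_λ ≤ k + ‖A_{k,⊥}‖_F² / λ = 2k`, so `β = 4kλ = 4‖A_{k,⊥}‖_F²` works; finally
`‖A_{m,⊥}‖_F² ≤ ‖A_{k,⊥}‖_F² + kλ = 2‖A_{k,⊥}‖_F²`.
-/

section Sampling

variable {n : ℕ} {p : Fin n → ℝ}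

theorem expec_succ {s : ℕ} (f : (Fin (s + 1) → Fin n) → ℝ) :
    expec p f = expec p (fun ω => ∑ j, p j * f (Fin.cons j ω)) := by
  rw [expec, ← (Fin.consEquiv fun _ => Fin n).sum_comp, Fintype.sum_prod_type, Finset.sum_comm]
  simp only [expec, Finset.mul_sum, Fin.consEquiv_apply, Fin.prod_univ_succ, Fin.cons_zero,
    Fin.cons_succ, mul_assoc, mul_left_comm]
  rfl

theorem expec_const (hp : ∑ j, p j = 1) {s : ℕ} (c : ℝ) :
    expec p (fun _ : Fin s → Fin n => c) = c := by
  rw [expec, ← Finset.sum_mul, ← Fintype.prod_sum fun _ => p, Finset.prod_eq_one fun _ _ => hp,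
    one_mul]

theorem expec_const_add (hp : ∑ j, p j = 1) {s : ℕ} (c : ℝ) (f : (Fin s → Fin n) → ℝ) :
    expec p (fun ω => c + f ω) = c + expec p f := by
  simp only [expec, mul_add, Finset.sum_add_distrib]
  rw [← expec, expec_const hp]

variable {E : Type*} [NormedAddCommGroup E] [InnerProductSpace ℝ E]

theorem expec_norm_sq_sum_of_centered (hp : ∑ j, p j = 1) (Z : Fin n → E)
    (hZ : ∑ j, p j • Z j = 0) (s : ℕ) :
    expec p (fun ω : Fin s → Fin n => ‖∑ t, Z (ω t)‖ ^ 2) = s * ∑ j, p j * ‖Z j‖ ^ 2 := by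
  induction s with
  | zero => simp [expec]
  | succ s ih =>
    have hstep : ∀ ω : Fin s → Fin n,
        ∑ j, p j * ‖∑ t, Z ((Fin.cons j ω : Fin (s + 1) → Fin n) t)‖ ^ 2
          = ∑ j, p j * ‖Z j‖ ^ 2 + ‖∑ t, Z (ω t)‖ ^ 2 := by
      intro ω
      have hcross : ∑ j, p j * (2 * inner ℝ (Z j) (∑ t, Z (ω t))) = 0 := by
        calc ∑ j, p j * (2 * inner ℝ (Z j) (∑ t, Z (ω t)))
            = 2 * inner ℝ (∑ j, p j • Z j) (∑ t, Z (ω t)) := by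
              simp only [sum_inner, real_inner_smul_left, Finset.mul_sum, mul_left_comm]
          _ = 0 := by rw [hZ, inner_zero_left, mul_zero]
      simp only [Fin.sum_univ_succ, Fin.cons_zero, Fin.cons_succ, norm_add_sq_real, mul_add,
        Finset.sum_add_distrib, ← Finset.sum_mul, hp, one_mul, hcross, add_zero]
    rw [expec_succ]
    simp only [hstep]
    rw [expec_const_add hp, ih]
    push_cast
    ring

theorem sum_mul_norm_sub_weighted_mean_sq_le {ι : Type*} [Fintype ι] {w : ι → ℝ}
    (hw : ∑ i, w i = 1) (x : ι → E) :
    ∑ i, w i * ‖x i - ∑ j, w j • x j‖ ^ 2 ≤ ∑ i, w i * ‖x i‖ ^ 2 := by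
  set μ := ∑ j, w j • x j
  have hcross : ∑ i, w i * (2 * inner ℝ (x i) μ) = 2 * ‖μ‖ ^ 2 := by
    simp only [← real_inner_self_eq_norm_sq, μ, sum_inner, real_inner_smul_left,
      Finset.mul_sum, mul_left_comm]
  have hsplit : ∑ i, w i * ‖x i - μ‖ ^ 2 = ∑ i, w i * ‖x i‖ ^ 2 - ‖μ‖ ^ 2 := by
    simp only [norm_sub_sq_real, mul_add, mul_sub, Finset.sum_add_distrib, Finset.sum_sub_distrib,
      hcross, ← Finset.sum_mul, hw]
    ring
  rw [hsplit]
  exact sub_le_self _ (sq_nonneg _)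

-- Indices with `p j = 0` drop out of the bound (`‖v j‖ ^ 2 / 0 = 0`).
theorem expec_norm_sq_importance_sampling_sub_le {s : ℕ} (hs : 0 < s) (hp : ∑ j, p j = 1)
    (v : Fin n → E) (hv : ∀ j, p j = 0 → v j = 0) :
    expec p (fun ω : Fin s → Fin n => ‖∑ t, (s * p (ω t))⁻¹ • v (ω t) - ∑ j, v j‖ ^ 2)
      ≤ (∑ j, ‖v j‖ ^ 2 / p j) / s := by
  have hs' : (s : ℝ) ≠ 0 := by positivity
  set x : Fin n → E := fun j => (s * p j)⁻¹ • v j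
  have hmean : ∑ j, p j • x j = (s : ℝ)⁻¹ • ∑ j, v j := by
    rw [Finset.smul_sum]
    refine Finset.sum_congr rfl fun j _ => ?_
    by_cases hj : p j = 0
    · simp [x, hj, hv j hj]
    · simp only [x, smul_smul]
      congr 1
      field_simp
  have hcentered : ∑ j, p j • (x j - (s : ℝ)⁻¹ • ∑ i, v i) = 0 := by
    simp only [smul_sub, Finset.sum_sub_distrib, hmean, ← Finset.sum_smul, hp, one_smul, sub_self]
  have hsum : ∀ ω : Fin s → Fin n,
      ∑ t, (x (ω t) - (s : ℝ)⁻¹ • ∑ i, v i) = ∑ t, (s * p (ω t))⁻¹ • v (ω t) - ∑ j, v j := by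
    intro ω
    simp only [Finset.sum_sub_distrib, Finset.sum_const, Finset.card_univ, Fintype.card_fin, x]
    rw [← Nat.cast_smul_eq_nsmul ℝ, smul_smul, mul_inv_cancel₀ hs', one_smul]
  have hterm : ∀ j, p j * ‖x j‖ ^ 2 = ‖v j‖ ^ 2 / p j / s ^ 2 := by
    intro j
    by_cases hj : p j = 0
    · simp [hj]
    · simp only [x, norm_smul, mul_pow, norm_inv, Real.norm_eq_abs, inv_pow, sq_abs]
      field_simp
  calc expec p (fun ω : Fin s → Fin n => ‖∑ t, (s * p (ω t))⁻¹ • v (ω t) - ∑ j, v j‖ ^ 2)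
      = s * ∑ j, p j * ‖x j - (s : ℝ)⁻¹ • ∑ i, v i‖ ^ 2 := by
        simp only [← hsum]
        exact expec_norm_sq_sum_of_centered hp _ hcentered s
    _ ≤ s * ∑ j, p j * ‖x j‖ ^ 2 := by
        rw [← hmean]
        exact mul_le_mul_of_nonneg_left (sum_mul_norm_sub_weighted_mean_sq_le hp x) (by positivity)
    _ = (∑ j, ‖v j‖ ^ 2 / p j) / s := by
        simp only [hterm, ← Finset.sum_div]
        field_simp

theorem sum_sq_div_le_mul_sum {ι : Type*} [Fintype ι] {q f : ι → ℝ} {β : ℝ}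
    (hq : ∀ j, 0 ≤ q j) (hf : ∀ j, 0 ≤ f j) (hfq : ∀ j, f j ≤ β * q j) :
    ∑ j, f j ^ 2 / q j ≤ β * ∑ j, f j := by
  rw [Finset.mul_sum]
  refine Finset.sum_le_sum fun j _ => ?_
  rcases (hq j).eq_or_lt with hj | hj
  · have hfj : f j = 0 := le_antisymm (by simpa [← hj] using hfq j) (hf j)
    simp [← hj, hfj]
  · rw [div_le_iff₀ hj]
    nlinarith [hfq j, hf j]

theorem expec_norm_sq_importance_sampling_sub_le_of_norm_le {s : ℕ} (hs : 0 < s)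
    (hp0 : ∀ j, 0 ≤ p j) (hp1 : ∑ j, p j = 1) (v : Fin n → E) {β : ℝ}
    (hv : ∀ j, ‖v j‖ ≤ β * p j) :
    expec p (fun ω : Fin s → Fin n => ‖∑ t, (s * p (ω t))⁻¹ • v (ω t) - ∑ j, v j‖ ^ 2)
      ≤ β * (∑ j, ‖v j‖) / s := by
  have hv0 : ∀ j, p j = 0 → v j = 0 := fun j hj =>
    norm_le_zero_iff.1 (by simpa [hj] using hv j)
  calc expec p (fun ω : Fin s → Fin n => ‖∑ t, (s * p (ω t))⁻¹ • v (ω t) - ∑ j, v j‖ ^ 2)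
      ≤ (∑ j, ‖v j‖ ^ 2 / p j) / s := expec_norm_sq_importance_sampling_sub_le hs hp1 v hv0
    _ ≤ β * (∑ j, ‖v j‖) / s := by
        gcongr
        exact sum_sq_div_le_mul_sum hp0 (fun j => norm_nonneg _) hv

end Sampling

section SampledMatrix

theorem frobNorm_sq {ι κ : Type*} [Fintype ι] [Fintype κ] (M : Matrix ι κ ℝ) :
    frobNorm M ^ 2 = ∑ i, ∑ j, M i j ^ 2 :=
  Real.sq_sqrt (by positivity)

variable {n d s : ℕ} {p : Fin n → ℝ}

theorem samplingMatrix_mul_apply (ω : Fin s → Fin n) (B : Matrix (Fin n) (Fin d) ℝ)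
    (t : Fin s) (c : Fin d) :
    (samplingMatrix p s ω * B) t c = B (ω t) c / √(s * p (ω t)) := by
  simp [Matrix.mul_apply, samplingMatrix, div_eq_inv_mul]

theorem samplingMatrix_mul_apply_mul_apply (hp : ∀ j, 0 ≤ p j) (ω : Fin s → Fin n)
    (B : Matrix (Fin n) (Fin d) ℝ) (t : Fin s) (c c' : Fin d) :
    (samplingMatrix p s ω * B) t c * (samplingMatrix p s ω * B) t c'
      = (s * p (ω t))⁻¹ * (B (ω t) c * B (ω t) c') := by
  have h := Real.mul_self_sqrt (mul_nonneg (Nat.cast_nonneg s) (hp (ω t)))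
  rw [samplingMatrix_mul_apply, samplingMatrix_mul_apply, div_mul_div_comm, h, inv_mul_eq_div]

theorem frobNorm_sq_samplingMatrix_mul (hp : ∀ j, 0 ≤ p j) (ω : Fin s → Fin n)
    (B : Matrix (Fin n) (Fin d) ℝ) :
    frobNorm (samplingMatrix p s ω * B) ^ 2 = ∑ t, (s * p (ω t))⁻¹ * ∑ c, B (ω t) c ^ 2 := by
  rw [frobNorm_sq]
  simp only [sq, samplingMatrix_mul_apply_mul_apply hp, Finset.mul_sum]

theorem gram_samplingMatrix_mul_apply (hp : ∀ j, 0 ≤ p j) (ω : Fin s → Fin n)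
    (B : Matrix (Fin n) (Fin d) ℝ) (c c' : Fin d) :
    (Bᵀ * (samplingMatrix p s ω)ᵀ * samplingMatrix p s ω * B) c c'
      = ∑ t, (s * p (ω t))⁻¹ * (B (ω t) c * B (ω t) c') := by
  rw [Matrix.mul_assoc, Matrix.mul_assoc, ← Matrix.mul_assoc Bᵀ, ← Matrix.transpose_mul,
    Matrix.mul_apply]
  simp only [Matrix.transpose_apply, samplingMatrix_mul_apply_mul_apply hp]

theorem expec_sq_frobNorm_sq_samplingMatrix_mul_sub_le (hs : 0 < s) (hp0 : ∀ j, 0 ≤ p j)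
    (hp1 : ∑ j, p j = 1) (B : Matrix (Fin n) (Fin d) ℝ) {β : ℝ}
    (hrow : ∀ j, ∑ c, B j c ^ 2 ≤ β * p j) :
    expec p (fun ω : Fin s → Fin n =>
        (frobNorm (samplingMatrix p s ω * B) ^ 2 - frobNorm B ^ 2) ^ 2)
      ≤ β * frobNorm B ^ 2 / s := by
  set f : Fin n → ℝ := fun j => ∑ c, B j c ^ 2
  have hf : ∀ j, ‖f j‖ = f j := fun j => Real.norm_of_nonneg (by positivity)
  convert expec_norm_sq_importance_sampling_sub_le_of_norm_le hs hp0 hp1 f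
    (fun j => (hf j).trans_le (hrow j)) using 3
  · simp only [frobNorm_sq_samplingMatrix_mul hp0, frobNorm_sq B, Real.norm_eq_abs, sq_abs,
      smul_eq_mul, f]
  · simp only [hf, frobNorm_sq B, f]

theorem expec_frobNorm_sq_gram_samplingMatrix_mul_sub_le (hs : 0 < s) (hp0 : ∀ j, 0 ≤ p j)
    (hp1 : ∑ j, p j = 1) (B : Matrix (Fin n) (Fin d) ℝ) {β : ℝ}
    (hrow : ∀ j, ∑ c, B j c ^ 2 ≤ β * p j) :
    expec p (fun ω : Fin s → Fin n =>
        frobNorm (Bᵀ * (samplingMatrix p s ω)ᵀ * samplingMatrix p s ω * B - Bᵀ * B) ^ 2)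
      ≤ β * frobNorm B ^ 2 / s := by
  set v : Fin n → EuclideanSpace ℝ (Fin d × Fin d) :=
    fun j => WithLp.toLp 2 fun x => B j x.1 * B j x.2
  have hv : ∀ j, ‖v j‖ = ∑ c, B j c ^ 2 := fun j => by
    rw [← sq_eq_sq₀ (norm_nonneg _) (by positivity), EuclideanSpace.real_norm_sq_eq, sq,
      Finset.sum_mul_sum, ← Finset.univ_product_univ, Finset.sum_product]
    simp only [v, mul_pow]
  convert expec_norm_sq_importance_sampling_sub_le_of_norm_le hs hp0 hp1 v
    (fun j => (hv j).trans_le (hrow j)) using 2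
  · funext ω
    rw [frobNorm_sq, EuclideanSpace.real_norm_sq_eq, ← Finset.univ_product_univ,
      Finset.sum_product]
    simp only [Matrix.sub_apply, gram_samplingMatrix_mul_apply hp0, v]
    simp [Matrix.mul_apply]
  · simp only [hv, frobNorm_sq B]

end SampledMatrix

section SVD

variable {r : ℕ}

def truncTail (σ : Fin r → ℝ) (m : ℕ) : Fin r → ℝ :=
  fun i => if (i : ℕ) < m then 0 else σ i

theorem sub_mul_truncDiag_mul_transpose {ι κ : Type*} [Fintype ι] [Fintype κ]
    {A : Matrix ι κ ℝ} {U : Matrix ι (Fin r) ℝ} {V : Matrix κ (Fin r) ℝ} {σ : Fin r → ℝ}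
    (hA : A = U * Matrix.diagonal σ * Vᵀ) (m : ℕ) :
    A - U * truncDiag σ m * Vᵀ = U * Matrix.diagonal (truncTail σ m) * Vᵀ := by
  rw [hA, ← Matrix.sub_mul, ← Matrix.mul_sub, truncDiag, Matrix.diagonal_sub]
  congr 3
  funext i
  by_cases h : (i : ℕ) < m <;> simp [truncTail, h]

theorem sum_sq_mul_transpose_apply {ι κ ν : Type*} [Fintype κ] [Fintype ν] [DecidableEq ν]
    {V : Matrix κ ν ℝ} (hV : Vᵀ * V = 1) (X : Matrix ι ν ℝ) (j : ι) :
    ∑ c, (X * Vᵀ) j c ^ 2 = ∑ i, X j i ^ 2 := by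
  have hgram : (X * Vᵀ) * (X * Vᵀ)ᵀ = X * Xᵀ := by
    rw [Matrix.transpose_mul, Matrix.transpose_transpose, Matrix.mul_assoc,
      ← Matrix.mul_assoc Vᵀ, hV, Matrix.one_mul]
  have hjj := congrFun (congrFun hgram j) j
  rw [Matrix.mul_apply, Matrix.mul_apply] at hjj
  simpa only [Matrix.transpose_apply, sq] using hjj

theorem sum_sq_mul_diagonal_apply {ι ν : Type*} [Fintype ν] [DecidableEq ν]
    (U : Matrix ι ν ℝ) (D : ν → ℝ) (j : ι) :
    ∑ i, (U * Matrix.diagonal D) j i ^ 2 = ∑ i, U j i ^ 2 * D i ^ 2 := by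
  simp only [Matrix.mul_diagonal, mul_pow]

theorem sum_sq_col_eq_one {ι ν : Type*} [Fintype ι] [DecidableEq ν] {U : Matrix ι ν ℝ}
    (hU : Uᵀ * U = 1) (i : ν) : ∑ j, U j i ^ 2 = 1 := by
  simpa [Matrix.mul_apply, sq] using congrFun (congrFun hU i) i

theorem sum_sum_sq_mul_diagonal {ι ν : Type*} [Fintype ι] [Fintype ν] [DecidableEq ν]
    {U : Matrix ι ν ℝ} (hU : Uᵀ * U = 1) (D : ν → ℝ) :
    ∑ j, ∑ i, (U * Matrix.diagonal D) j i ^ 2 = ∑ i, D i ^ 2 := by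
  simp only [sum_sq_mul_diagonal_apply]
  rw [Finset.sum_comm]
  simp only [← Finset.sum_mul, sum_sq_col_eq_one hU, one_mul]

theorem frobNorm_sq_mul_diagonal_mul_transpose {ι κ ν : Type*} [Fintype ι] [Fintype κ]
    [Fintype ν] [DecidableEq ν] {U : Matrix ι ν ℝ} {V : Matrix κ ν ℝ} (hU : Uᵀ * U = 1)
    (hV : Vᵀ * V = 1) (D : ν → ℝ) :
    frobNorm (U * Matrix.diagonal D * Vᵀ) ^ 2 = ∑ i, D i ^ 2 := by
  simp only [frobNorm_sq, sum_sq_mul_transpose_apply hV, sum_sum_sq_mul_diagonal hU]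

theorem frobNorm_sq_sub_mul_truncDiag_mul_transpose {ι κ : Type*} [Fintype ι] [Fintype κ]
    {A : Matrix ι κ ℝ} {U : Matrix ι (Fin r) ℝ} {V : Matrix κ (Fin r) ℝ} {σ : Fin r → ℝ}
    (hU : Uᵀ * U = 1) (hV : Vᵀ * V = 1) (hA : A = U * Matrix.diagonal σ * Vᵀ) (m : ℕ) :
    frobNorm (A - U * truncDiag σ m * Vᵀ) ^ 2 = ∑ i, truncTail σ m i ^ 2 := by
  rw [sub_mul_truncDiag_mul_transpose hA, frobNorm_sq_mul_diagonal_mul_transpose hU hV]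

end SVD

section RidgeLeverage

variable {r : ℕ} {σ : Fin r → ℝ} {lam : ℝ}

theorem sum_ite_val_lt_le (k : ℕ) {c : ℝ} (hc : 0 ≤ c) :
    ∑ i : Fin r, (if (i : ℕ) < k then c else 0) ≤ k * c := by
  rw [Finset.sum_ite, Finset.sum_const_zero, add_zero, Finset.sum_const, Fin.card_filter_val_lt,
    nsmul_eq_mul]
  gcongr
  exact_mod_cast min_le_right r k

theorem sum_sq_div_sq_add_le (hlam : 0 < lam) (k : ℕ) :
    ∑ i, σ i ^ 2 / (σ i ^ 2 + lam) ≤ k + (∑ i, truncTail σ k i ^ 2) / lam := by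
  have hterm : ∀ i : Fin r,
      σ i ^ 2 / (σ i ^ 2 + lam) ≤ (if (i : ℕ) < k then 1 else 0) + truncTail σ k i ^ 2 / lam := by
    intro i
    by_cases hi : (i : ℕ) < k
    · have hle : σ i ^ 2 / (σ i ^ 2 + lam) ≤ 1 := by
        rw [div_le_one (by positivity)]
        linarith
      simpa [truncTail, hi] using hle
    · simp only [hi, if_false, truncTail, zero_add]
      gcongr
      linarith [sq_nonneg (σ i)]
  calc ∑ i, σ i ^ 2 / (σ i ^ 2 + lam)
      ≤ ∑ i : Fin r, ((if (i : ℕ) < k then 1 else 0) + truncTail σ k i ^ 2 / lam) :=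
        Finset.sum_le_sum fun i _ => hterm i
    _ ≤ k + (∑ i, truncTail σ k i ^ 2) / lam := by
        rw [Finset.sum_add_distrib, Finset.sum_div]
        gcongr
        simpa using sum_ite_val_lt_le (r := r) k zero_le_one

theorem sum_truncTail_sq_le (hlam : 0 ≤ lam) {m : ℕ} (hσ : ∀ i : Fin r, m ≤ i → σ i ^ 2 ≤ lam)
    (k : ℕ) : ∑ i, truncTail σ m i ^ 2 ≤ ∑ i, truncTail σ k i ^ 2 + k * lam := by
  have hterm : ∀ i : Fin r,
      truncTail σ m i ^ 2 ≤ truncTail σ k i ^ 2 + (if (i : ℕ) < k then lam else 0) := by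
    intro i
    by_cases hm : (i : ℕ) < m
    · have hlam' : 0 ≤ (if (i : ℕ) < k then lam else 0) := by split_ifs <;> simp [hlam]
      simp only [truncTail, hm, if_true, ne_eq, OfNat.ofNat_ne_zero, not_false_eq_true, zero_pow]
      exact add_nonneg (sq_nonneg _) hlam'
    · by_cases hk : (i : ℕ) < k
      · simpa [truncTail, hm, hk] using hσ i (not_lt.1 hm)
      · simp [truncTail, hm, hk]
  calc ∑ i, truncTail σ m i ^ 2
      ≤ ∑ i : Fin r, (truncTail σ k i ^ 2 + (if (i : ℕ) < k then lam else 0)) :=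
        Finset.sum_le_sum fun i _ => hterm i
    _ ≤ ∑ i, truncTail σ k i ^ 2 + k * lam := by
        rw [Finset.sum_add_distrib]
        gcongr
        exact sum_ite_val_lt_le k hlam

theorem truncTail_sq_le (hlam : 0 < lam) {m : ℕ} (hσ : ∀ i : Fin r, m ≤ i → σ i ^ 2 ≤ lam)
    (i : Fin r) : truncTail σ m i ^ 2 ≤ 2 * lam * (σ i ^ 2 / (σ i ^ 2 + lam)) := by
  by_cases hm : (i : ℕ) < m
  · simp only [truncTail, hm, if_true, ne_eq, OfNat.ofNat_ne_zero, not_false_eq_true, zero_pow]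
    positivity
  · simp only [truncTail, hm, if_false]
    rw [mul_div_assoc', le_div_iff₀ (by positivity)]
    nlinarith [hσ i (not_lt.1 hm), sq_nonneg (σ i)]

noncomputable def ridgeLeverage {ι : Type*} (U : Matrix ι (Fin r) ℝ) (σ : Fin r → ℝ) (lam : ℝ)
    (j : ι) : ℝ :=
  ∑ i, (U * ridgeDiag σ lam) j i ^ 2

theorem ridgeLeverage_nonneg {ι : Type*} (U : Matrix ι (Fin r) ℝ) (j : ι) :
    0 ≤ ridgeLeverage U σ lam j := by
  unfold ridgeLeverage
  positivity

theorem ridgeLeverage_eq {ι : Type*} (hlam : 0 ≤ lam) (U : Matrix ι (Fin r) ℝ) (j : ι) :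
    ridgeLeverage U σ lam j = ∑ i, U j i ^ 2 * (σ i ^ 2 / (σ i ^ 2 + lam)) := by
  simp only [ridgeLeverage, ridgeDiag, sum_sq_mul_diagonal_apply, div_pow,
    Real.sq_sqrt (by positivity : 0 ≤ σ _ ^ 2 + lam)]

theorem sum_ridgeLeverage {ι : Type*} [Fintype ι] {U : Matrix ι (Fin r) ℝ} (hU : Uᵀ * U = 1)
    (hlam : 0 ≤ lam) : ∑ j, ridgeLeverage U σ lam j = ∑ i, σ i ^ 2 / (σ i ^ 2 + lam) := by
  simp only [ridgeLeverage_eq hlam]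
  rw [Finset.sum_comm]
  simp only [← Finset.sum_mul, sum_sq_col_eq_one hU, one_mul]

theorem sum_sq_residual_row_le {ι κ : Type*} [Fintype κ] {V : Matrix κ (Fin r) ℝ}
    (hV : Vᵀ * V = 1) (hlam : 0 < lam) {m : ℕ} (hσ : ∀ i : Fin r, m ≤ i → σ i ^ 2 ≤ lam)
    (U : Matrix ι (Fin r) ℝ) (j : ι) :
    ∑ c, (U * Matrix.diagonal (truncTail σ m) * Vᵀ) j c ^ 2
      ≤ 2 * lam * ridgeLeverage U σ lam j := by
  rw [sum_sq_mul_transpose_apply hV, sum_sq_mul_diagonal_apply, ridgeLeverage_eq hlam.le,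
    Finset.mul_sum]
  refine Finset.sum_le_sum fun i _ => ?_
  rw [mul_left_comm]
  exact mul_le_mul_of_nonneg_left (truncTail_sq_le hlam hσ i) (sq_nonneg _)

theorem sum_truncTail_sq_pos {k : ℕ} (hσ : ∀ i, 0 < σ i) (hk : k < r) :
    0 < ∑ i, truncTail σ k i ^ 2 := by
  have hσk : truncTail σ k ⟨k, hk⟩ ^ 2 = σ ⟨k, hk⟩ ^ 2 := by simp [truncTail]
  exact (hσk ▸ pow_pos (hσ _) 2).trans_le
    (Finset.single_le_sum (fun i _ => sq_nonneg (truncTail σ k i)) (Finset.mem_univ _))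

theorem sum_ridgeLeverage_pos {ι : Type*} [Fintype ι] {U : Matrix ι (Fin r) ℝ}
    (hU : Uᵀ * U = 1) (hσ : ∀ i, 0 < σ i) (hlam : 0 ≤ lam) (hr : 0 < r) :
    0 < ∑ j, ridgeLeverage U σ lam j := by
  rw [sum_ridgeLeverage hU hlam]
  exact Finset.sum_pos (fun i _ => by have := hσ i; positivity) ⟨⟨0, hr⟩, Finset.mem_univ _⟩

theorem sum_ridgeLeverage_le {ι : Type*} [Fintype ι] {U : Matrix ι (Fin r) ℝ}
    (hU : Uᵀ * U = 1) (hlam : 0 < lam) {k : ℕ} (hk : ∑ i, truncTail σ k i ^ 2 = k * lam) :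
    ∑ j, ridgeLeverage U σ lam j ≤ 2 * k := by
  have hdim := sum_sq_div_sq_add_le (σ := σ) hlam k
  rw [← sum_ridgeLeverage hU hlam.le, hk, mul_div_cancel_right₀ _ hlam.ne'] at hdim
  linarith

theorem sum_sq_residual_row_le_ridgeProb {ι κ : Type*} [Fintype ι] [Fintype κ]
    {U : Matrix ι (Fin r) ℝ} {V : Matrix κ (Fin r) ℝ} (hU : Uᵀ * U = 1) (hV : Vᵀ * V = 1)
    (hlam : 0 < lam) {m k : ℕ} (hσ : ∀ i : Fin r, m ≤ i → σ i ^ 2 ≤ lam)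
    (hk : ∑ i, truncTail σ k i ^ 2 = k * lam) (hD : 0 < ∑ j, ridgeLeverage U σ lam j) (j : ι) :
    ∑ c, (U * Matrix.diagonal (truncTail σ m) * Vᵀ) j c ^ 2
      ≤ 4 * (k * lam) * (ridgeLeverage U σ lam j / ∑ j, ridgeLeverage U σ lam j) :=
  calc ∑ c, (U * Matrix.diagonal (truncTail σ m) * Vᵀ) j c ^ 2
      ≤ 2 * lam * ridgeLeverage U σ lam j := sum_sq_residual_row_le hV hlam hσ U j
    _ = 2 * lam * (∑ j, ridgeLeverage U σ lam j)
          * (ridgeLeverage U σ lam j / ∑ j, ridgeLeverage U σ lam j) := by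
        field_simp
    _ ≤ 2 * lam * (2 * k) * (ridgeLeverage U σ lam j / ∑ j, ridgeLeverage U σ lam j) := by
        gcongr
        · exact div_nonneg (ridgeLeverage_nonneg U j) hD.le
        · exact sum_ridgeLeverage_le hU hlam hk
    _ = 4 * (k * lam) * (ridgeLeverage U σ lam j / ∑ j, ridgeLeverage U σ lam j) := by ring

end RidgeLeverage

/-- ridge leverage score sampling, residual-term expectation bounds. -/
theorem stmt_17 {n d r : ℕ} {k m : ℕ} (s : ℕ) (hs : 0 < s)
    (A : Matrix (Fin n) (Fin d) ℝ)
    (U : Matrix (Fin n) (Fin r) ℝ) (V : Matrix (Fin d) (Fin r) ℝ) (σ : Fin r → ℝ)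
    (hU : Uᵀ * U = 1) (hV : Vᵀ * V = 1)
    (hσdec : ∀ i j : Fin r, i ≤ j → σ j ≤ σ i) (hσpos : ∀ i, 0 < σ i)
    (hA : A = U * Matrix.diagonal σ * Vᵀ)
    (hk1 : 1 ≤ k) (hkr : k < r)
    (lam : ℝ) (hlam : lam = frobNorm (A - U * truncDiag σ k * Vᵀ) ^ 2 / k)
    (hσm1 : ∀ h : m < r, σ ⟨m, h⟩ ^ 2 ≤ lam)
    (p : Fin n → ℝ)
    (hpdef : ∀ i, p i = (∑ j, ((U * ridgeDiag σ lam) i j) ^ 2)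
        / (∑ i', ∑ j, ((U * ridgeDiag σ lam) i' j) ^ 2)) :
    expec p (fun (ω : Fin s → Fin n) =>
        (frobNorm (samplingMatrix p s ω * (A - U * truncDiag σ m * Vᵀ)) ^ 2
          - frobNorm (A - U * truncDiag σ m * Vᵀ) ^ 2) ^ 2)
      ≤ 8 / s * frobNorm (A - U * truncDiag σ k * Vᵀ) ^ 4
    ∧ expec p (fun (ω : Fin s → Fin n) =>
        frobNorm ((A - U * truncDiag σ m * Vᵀ)ᵀ * (samplingMatrix p s ω)ᵀ
          * samplingMatrix p s ω * (A - U * truncDiag σ m * Vᵀ)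
          - (A - U * truncDiag σ m * Vᵀ)ᵀ * (A - U * truncDiag σ m * Vᵀ)) ^ 2)
      ≤ 8 / s * frobNorm (A - U * truncDiag σ k * Vᵀ) ^ 4 := by
  have hFk := frobNorm_sq_sub_mul_truncDiag_mul_transpose hU hV hA k
  have hlampos : 0 < lam := by
    rw [hlam, hFk]
    exact div_pos (sum_truncTail_sq_pos hσpos hkr) (by exact_mod_cast hk1)
  have hkF : ∑ i, truncTail σ k i ^ 2 = k * lam := by
    rw [hlam, hFk, mul_div_cancel₀ _ (by positivity)]
  have htail : ∀ i : Fin r, m ≤ i → σ i ^ 2 ≤ lam := fun i hi =>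
    (pow_le_pow_left₀ (hσpos i).le (hσdec ⟨m, hi.trans_lt i.2⟩ i hi) 2).trans (hσm1 _)
  have hD := sum_ridgeLeverage_pos hU hσpos hlampos.le (by omega)
  have hp : ∀ j, p j = ridgeLeverage U σ lam j / ∑ j, ridgeLeverage U σ lam j := hpdef
  have hp0 : ∀ j, 0 ≤ p j := fun j => (hp j).symm ▸ div_nonneg (ridgeLeverage_nonneg U j) hD.le
  have hp1 : ∑ j, p j = 1 := by
    simp only [hp, ← Finset.sum_div]
    exact div_self hD.ne'
  have hrow : ∀ j, ∑ c, (A - U * truncDiag σ m * Vᵀ) j c ^ 2 ≤ 4 * (k * lam) * p j := fun j => by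
    rw [hp j, sub_mul_truncDiag_mul_transpose hA]
    exact sum_sq_residual_row_le_ridgeProb hU hV hlampos htail hkF hD j
  have hFm : frobNorm (A - U * truncDiag σ m * Vᵀ) ^ 2 ≤ 2 * (k * lam) := by
    rw [frobNorm_sq_sub_mul_truncDiag_mul_transpose hU hV hA m]
    linarith [sum_truncTail_sq_le hlampos.le htail k]
  have hbound : 4 * (k * lam) * frobNorm (A - U * truncDiag σ m * Vᵀ) ^ 2 / s
      ≤ 8 / s * frobNorm (A - U * truncDiag σ k * Vᵀ) ^ 4 := by
    rw [show frobNorm (A - U * truncDiag σ k * Vᵀ) ^ 4 = (k * lam) ^ 2 by rw [← hkF, ← hFk]; ring]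
    calc 4 * (k * lam) * frobNorm (A - U * truncDiag σ m * Vᵀ) ^ 2 / s
        ≤ 4 * (k * lam) * (2 * (k * lam)) / s := by gcongr
      _ = 8 / s * (k * lam) ^ 2 := by ring
  exact ⟨(expec_sq_frobNorm_sq_samplingMatrix_mul_sub_le hs hp0 hp1 _ hrow).trans hbound,
    (expec_frobNorm_sq_gram_samplingMatrix_mul_sub_le hs hp0 hp1 _ hrow).trans hbound⟩
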